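/- arXiv:2202.02719 — 6 statements merged into one kernel-verified Lean document; each statement's English description precedes it below -/
import Mathlib

section
/- Let β* ∈ ℝ, s > 0, and let 0 < α₁ < ... < α_b. The convex hull C(s) of the points p_{α_i}(s) = (α_i, β* + s/α_i, β*α_i + s), i = 1,...,b, intersects the surface Σ = {z = xy} exactly in the points p_{α_1}(s), ..., p_{α_b}(s). -/
/-!
The points `p_a(s)` are the images of the points `(a, a⁻¹)` of the hyperbola `x u = 1` under the
affine map `(x, u) ↦ (x, β* + s u, β* x + s)` onto the plane `z = β* x + s`, which
pulls `Σ` back to that hyperbola (as `s ≠ 0`). Affine maps commute with convex hulls, so it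
suffices to show that a point of the hyperbola lying in the convex hull of some points
`(a, a⁻¹)`, `a > 0`, is one of them; this is the equality case of Jensen's inequality for the
strictly convex function `x ↦ x⁻¹` on `(0, ∞)`.
-/

/-- The hyperbolic paraboloid `z = xy` in `ℝ³`. -/
def hypPar : Set (ℝ × ℝ × ℝ) := {p | p.2.2 = p.1 * p.2.1}

/-- The point `p_α(s) = (α, β* + s/α, β*·α + s)`. -/
noncomputable def pPt (β' α s : ℝ) : ℝ × ℝ × ℝ := (α, β' + s / α, β' * α + s)

open Finset

theorem StrictConvexOn.mem_of_mem_convexHull_graph {𝕜 E : Type*} [Field 𝕜] [LinearOrder 𝕜]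
    [IsStrictOrderedRing 𝕜] [AddCommGroup E] [Module 𝕜 E] {S A : Set E} {f : E → 𝕜}
    (hf : StrictConvexOn 𝕜 S f) (hA : A ⊆ S) {x : E}
    (hx : (x, f x) ∈ convexHull 𝕜 ((fun a => (a, f a)) '' A)) : x ∈ A := by
  obtain ⟨ι, _, w, z, hw₀, hw₁, hz, hwz⟩ := mem_convexHull_iff_exists_fintype.mp hx
  choose a ha hza using hz
  obtain rfl : z = fun i => (a i, f (a i)) := funext fun i => (hza i).symm
  have hsum : ∑ i, w i • a i = x := by simpa [Prod.fst_sum] using congrArg Prod.fst hwz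
  have hfsum : ∑ i, w i • f (a i) = f x := by simpa [Prod.snd_sum] using congrArg Prod.snd hwz
  have hconst := (hf.map_sum_eq_iff_of_nonneg (t := univ) (fun i _ => hw₀ i) hw₁
    (fun i _ => hA (ha i))).mp (by rw [hsum, hfsum])
  obtain ⟨j, -, hj⟩ := exists_ne_zero_of_sum_ne_zero (hw₁ ▸ one_ne_zero)
  suffices x = a j from this ▸ ha j
  calc x = ∑ i, w i • a j := by
        rw [← hsum]
        refine sum_congr rfl fun i _ => ?_
        by_cases hi : w i = 0
        · simp [hi]
        · rw [hconst (mem_univ i) hi (mem_univ j) hj]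
    _ = a j := by rw [← sum_smul, hw₁, one_smul]

def hyperbolaChart (β' s : ℝ) : ℝ × ℝ →ᵃ[ℝ] ℝ × ℝ × ℝ where
  toFun p := (p.1, β' + s * p.2, β' * p.1 + s)
  linear := LinearMap.fst ℝ ℝ ℝ |>.prod ((s • LinearMap.snd ℝ ℝ ℝ).prod (β' • LinearMap.fst ℝ ℝ ℝ))
  map_vadd' p v := by
    ext <;> simp <;> ring

@[simp]
theorem hyperbolaChart_apply (β' s : ℝ) (p : ℝ × ℝ) :
    hyperbolaChart β' s p = (p.1, β' + s * p.2, β' * p.1 + s) := rfl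

theorem pPt_eq_hyperbolaChart (β' a s : ℝ) : pPt β' a s = hyperbolaChart β' s (a, a⁻¹) := by
  simp [pPt, div_eq_mul_inv]

theorem hyperbolaChart_mem_hypPar_iff {β' s : ℝ} (hs : s ≠ 0) (p : ℝ × ℝ) :
    hyperbolaChart β' s p ∈ hypPar ↔ p.1 * p.2 = 1 := by
  simp only [hyperbolaChart_apply, hypPar, Set.mem_ofPred_eq]
  constructor
  · intro h
    apply mul_left_cancel₀ hs
    linear_combination -h
  · intro h
    linear_combination -s * h

theorem convexHull_image_pPt_inter_hypPar (β' : ℝ) {s : ℝ} (hs : s ≠ 0) {A : Set ℝ}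
    (hA : A ⊆ Set.Ioi 0) :
    convexHull ℝ ((pPt β' · s) '' A) ∩ hypPar = (pPt β' · s) '' A := by
  refine subset_antisymm ?_ fun q hq => ⟨subset_convexHull ℝ _ hq, ?_⟩
  · rintro q ⟨hq, hqPar⟩
    have himage : (pPt β' · s) '' A = hyperbolaChart β' s '' ((fun a => (a, a⁻¹)) '' A) := by
      simp only [Set.image_image, pPt_eq_hyperbolaChart]
    rw [himage, ← AffineMap.image_convexHull] at hq
    obtain ⟨⟨x, u⟩, hxu, rfl⟩ := hq
    obtain rfl : u = x⁻¹ :=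
      eq_inv_of_mul_eq_one_right ((hyperbolaChart_mem_hypPar_iff hs _).mp hqPar)
    have hinv := strictConvexOn_zpow (m := -1) (by norm_num) (by norm_num)
    exact ⟨x, hinv.mem_of_mem_convexHull_graph hA (by simpa using hxu),
      pPt_eq_hyperbolaChart β' x s⟩
  · obtain ⟨a, ha, rfl⟩ := hq
    show pPt β' a s ∈ hypPar
    rw [pPt_eq_hyperbolaChart, hyperbolaChart_mem_hypPar_iff hs]
    exact mul_inv_cancel₀ (hA ha).ne'

theorem stmt_5_general (β' s : ℝ) (hs : 0 < s) (b : ℕ) (α : Fin b → ℝ)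
    (hpos : ∀ i, 0 < α i) :
    convexHull ℝ (Set.range fun i => pPt β' (α i) s) ∩ hypPar
      = Set.range fun i => pPt β' (α i) s := by
  have hrange : (Set.range fun i => pPt β' (α i) s) = (pPt β' · s) '' Set.range α :=
    Set.range_comp (pPt β' · s) α
  rw [hrange]
  exact convexHull_image_pPt_inter_hypPar β' hs.ne' (Set.range_subset_iff.mpr hpos)

theorem stmt_5 (β' s : ℝ) (hs : 0 < s) (b : ℕ) (α : Fin b → ℝ)
    (hpos : ∀ i, 0 < α i) (hmono : StrictMono α) :
    convexHull ℝ (Set.range fun i => pPt β' (α i) s) ∩ hypPar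
      = Set.range fun i => pPt β' (α i) s :=
  stmt_5_general β' s hs b α hpos
end

section
/- For every integer n there exists a family L of n pairwise disjoint lines in ℝ³ with the property: for every subfamily B ⊆ L and every finite family R of lines with B ∩ R = ∅, there exists a nonempty compact convex set K ⊂ ℝ³ that intersects every line of B and is disjoint from every line of R. -/
def IsLine {E : Type*} [AddCommGroup E] [Module ℝ E] (s : Set E) : Prop :=
  ∃ p v : E, v ≠ 0 ∧ s = {x | ∃ t : ℝ, x = p + t • v}

/-!
Take the rulings `λ_α = {(α, t, αt)}` of the saddle `z = xy` for `α = 1, …, n`. To meet the rulings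
`λ_α` with `α ∈ X` and avoid finitely many lines `R`, choose a height `c` such that the line
`{(x, c, cx)}` of the other ruling misses every line of `R` not lying on the saddle (such a line
meets the saddle in at most two points), and take `K = conv {(α, c + εα, α(c + εα)) : α ∈ X}`.
The vertices lie on the parabola cut out of the saddle by the plane `y = c + εx`, so for `ε ≠ 0`
the polytope `K` meets the saddle only in its vertices, and for all but finitely many `ε` these
avoid the lines of `R`. For small `ε`, `K` lies in a thin neighbourhood of the segment
`conv {(α, c, cα)}`, hence misses the lines of `R` off the saddle.
-/

open Set Filter Topology Metric

section Lines

variable {E : Type*}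

theorem IsLine.eq_setOf_add_smul_sub [AddCommGroup E] [Module ℝ E] {s : Set E} (hs : IsLine s)
    {x y : E} (hx : x ∈ s) (hy : y ∈ s) (hxy : x ≠ y) :
    s = {z | ∃ t : ℝ, z = x + t • (y - x)} := by
  obtain ⟨p, v, -, rfl⟩ := hs
  obtain ⟨a, rfl⟩ := hx
  obtain ⟨b, rfl⟩ := hy
  have hba : b - a ≠ 0 := sub_ne_zero.2 fun h => hxy (by rw [h])
  have hyx : p + b • v - (p + a • v) = (b - a) • v := by rw [sub_smul]; abel
  ext z
  simp only [mem_ofPred_eq, hyx, smul_smul]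
  constructor
  · rintro ⟨t, rfl⟩
    exact ⟨(t - a) / (b - a), by rw [div_mul_cancel₀ _ hba, sub_smul]; abel⟩
  · rintro ⟨t, rfl⟩
    exact ⟨a + t * (b - a), by rw [add_smul]; abel⟩

theorem IsLine.inter_subsingleton [AddCommGroup E] [Module ℝ E] {s t : Set E} (hs : IsLine s)
    (ht : IsLine t) (hst : s ≠ t) : (s ∩ t).Subsingleton := by
  rintro x ⟨hxs, hxt⟩ y ⟨hys, hyt⟩
  by_contra hxy
  exact hst ((hs.eq_setOf_add_smul_sub hxs hys hxy).trans
    (ht.eq_setOf_add_smul_sub hxt hyt hxy).symm)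

theorem IsLine.isClosed [NormedAddCommGroup E] [NormedSpace ℝ E] {s : Set E} (hs : IsLine s) :
    IsClosed s := by
  obtain ⟨p, v, hv, rfl⟩ := hs
  have hrange : {x | ∃ t : ℝ, x = p + t • v} = range ((p + ·) ∘ fun t : ℝ => t • v) := by
    ext x; simp [eq_comm]
  rw [hrange]
  exact ((Homeomorph.addLeft p).isClosedEmbedding.comp
    (isClosedEmbedding_smul_left hv)).isClosed_range

end Lines

namespace Saddle

local notation "ℝ³" => ℝ × ℝ × ℝ

def pt (x y : ℝ) : ℝ³ := (x, y, x * y)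

def surface : Set ℝ³ := {p | p.2.2 = p.1 * p.2.1}

def ruling (α : ℝ) : Set ℝ³ := range (pt α)

theorem pt_mem_surface (x y : ℝ) : pt x y ∈ surface := rfl

theorem pt_mem_ruling (x y : ℝ) : pt x y ∈ ruling x := ⟨y, rfl⟩

theorem pt_inj {x y x' y' : ℝ} : pt x y = pt x' y' ↔ x = x' ∧ y = y' := by
  simp only [pt, Prod.mk.injEq]
  constructor
  · exact fun h => ⟨h.1, h.2.1⟩
  · rintro ⟨rfl, rfl⟩
    exact ⟨rfl, rfl, rfl⟩

theorem isLine_ruling (α : ℝ) : IsLine (ruling α) := by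
  refine ⟨pt α 0, (0, 1, α), by simp, ?_⟩
  ext p
  simp only [ruling, mem_range, mem_ofPred_eq, pt]
  refine exists_congr fun t => ?_
  rw [eq_comm]
  simp [mul_comm]

theorem ruling_injective : Function.Injective ruling := by
  intro α β h
  obtain ⟨t, ht⟩ : pt α 0 ∈ ruling β := h ▸ pt_mem_ruling α 0
  exact (pt_inj.1 ht).1.symm

theorem disjoint_ruling {α β : ℝ} (h : α ≠ β) : Disjoint (ruling α) (ruling β) := by
  rw [Set.disjoint_left]
  rintro _ ⟨s, rfl⟩ ⟨t, ht⟩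
  exact h (pt_inj.1 ht).1.symm

open Polynomial in
theorem _root_.IsLine.finite_inter_surface {r : Set ℝ³} (hr : IsLine r) (hrS : ¬ r ⊆ surface) :
    (r ∩ surface).Finite := by
  obtain ⟨p, v, -, rfl⟩ := hr
  set Q : ℝ[X] := (C p.2.2 + C v.2.2 * X) - (C p.1 + C v.1 * X) * (C p.2.1 + C v.2.1 * X)
  have hQ (t : ℝ) : p + t • v ∈ surface ↔ Q.IsRoot t := by
    simp [surface, Q, sub_eq_zero, mul_comm t]
  have hQ0 : Q ≠ 0 := by
    intro hQ0
    exact hrS fun _ ⟨t, ht⟩ => ht ▸ (hQ t).2 (by simp [hQ0])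
  refine ((finite_setOfPred_isRoot hQ0).image fun t => p + t • v).subset ?_
  rintro _ ⟨⟨t, rfl⟩, ht⟩
  exact ⟨t, (hQ t).1 ht, rfl⟩

theorem convexHull_inter_surface_subset {c ε : ℝ} (hε : ε ≠ 0) {V : Finset ℝ³}
    (hV : ∀ v ∈ V, v = pt v.1 (c + ε * v.1)) : convexHull ℝ ↑V ∩ surface ⊆ V := by
  rintro q ⟨hq, hqS⟩
  obtain ⟨w, hw0, hw1, rfl⟩ := Finset.mem_convexHull'.1 hq
  set m := ∑ v ∈ V, w v • v.1
  have hx : (∑ v ∈ V, w v • v).1 = m := by simp [m, Prod.fst_sum]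
  have hy : (∑ v ∈ V, w v • v).2.1 = c + ε * m := by
    calc (∑ v ∈ V, w v • v).2.1 = ∑ v ∈ V, (c * w v + ε * (w v • v.1)) := by
          simp only [Prod.snd_sum, Prod.fst_sum]
          refine Finset.sum_congr rfl fun v hv => ?_
          rw [hV v hv]; simp only [pt, Prod.smul_fst, Prod.smul_snd, smul_eq_mul]; ring
      _ = c + ε * m := by
        rw [Finset.sum_add_distrib, ← Finset.mul_sum, ← Finset.mul_sum, hw1, mul_one]
  have hz : (∑ v ∈ V, w v • v).2.2 = c * m + ε * ∑ v ∈ V, w v • v.1 ^ 2 := by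
    calc (∑ v ∈ V, w v • v).2.2 = ∑ v ∈ V, (c * (w v • v.1) + ε * (w v • v.1 ^ 2)) := by
          simp only [Prod.snd_sum]
          refine Finset.sum_congr rfl fun v hv => ?_
          rw [hV v hv]; simp only [pt, Prod.smul_snd, smul_eq_mul]; ring
      _ = c * m + ε * ∑ v ∈ V, w v • v.1 ^ 2 := by
        rw [Finset.sum_add_distrib, ← Finset.mul_sum, ← Finset.mul_sum]
  -- On the plane `y = c + ε x` the surface is the parabola `z = c x + ε x²`, so a convex
  -- combination lies on it only when Jensen's inequality for `x ↦ x²` is an equality.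
  have hzS : (∑ v ∈ V, w v • v).2.2 = m * (c + ε * m) := by rw [hqS, hx, hy]
  have hjensen : m ^ 2 = ∑ v ∈ V, w v • v.1 ^ 2 :=
    mul_left_cancel₀ hε (by linear_combination hz.symm.trans hzS |>.symm)
  have hconst := ((Even.strictConvexOn_pow even_two two_ne_zero).map_sum_eq_iff' hw0 hw1
    (fun v _ => mem_univ v.1)).1 hjensen
  obtain ⟨v, hv, hwv⟩ := Finset.exists_ne_zero_of_sum_ne_zero (hw1 ▸ one_ne_zero)
  have hvm : v.1 = m := hconst v hv hwv
  suffices ∑ v ∈ V, w v • v = v by rw [this]; exact hv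
  rw [hV v hv]
  ext
  · exact hx.trans hvm.symm
  · simp [hy, pt, hvm]
  · simp [hzS, pt, hvm]

theorem exists_forall_pt_notMem {R : Finset (Set ℝ³)} (hR : ∀ r ∈ R, IsLine r) :
    ∃ c : ℝ, ∀ r ∈ R, ¬ r ⊆ surface → ∀ x, pt x c ∉ r := by
  have hfin : (⋃ r ∈ {r ∈ (R : Set (Set ℝ³)) | ¬ r ⊆ surface},
      (fun p : ℝ³ => p.2.1) '' (r ∩ surface)).Finite :=
    (R.finite_toSet.sep _).biUnion fun r hr => ((hR r hr.1).finite_inter_surface hr.2).image _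
  obtain ⟨c, hc⟩ := hfin.infinite_compl.nonempty
  refine ⟨c, fun r hr hrS x hx => hc ?_⟩
  exact mem_biUnion ⟨hr, hrS⟩ ⟨pt x c, ⟨hx, pt_mem_surface x c⟩, rfl⟩

theorem eventually_pt_notMem {R : Finset (Set ℝ³)} (hR : ∀ r ∈ R, IsLine r) {X : Finset ℝ}
    (hX : (0 : ℝ) ∉ X) (hXR : ∀ x ∈ X, ruling x ∉ R) (c : ℝ) :
    ∀ᶠ ε in 𝓝[≠] 0, ∀ r ∈ R, ∀ x ∈ X, pt x (c + ε * x) ∉ r := by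
  refine (eventually_all_finset R).2 fun r hr => (eventually_all_finset X).2 fun x hx => ?_
  have hx0 : x ≠ 0 := fun h => hX (h ▸ hx)
  have hbad : {ε : ℝ | pt x (c + ε * x) ∈ r}.Subsingleton := fun ε hε ε' hε' =>
    have := (hR r hr).inter_subsingleton (isLine_ruling x) (fun h => hXR x hx (h ▸ hr))
      ⟨hε, pt_mem_ruling _ _⟩ ⟨hε', pt_mem_ruling _ _⟩
    mul_right_cancel₀ hx0 (add_left_cancel (pt_inj.1 this).2)
  exact nhdsNE_le_cofinite 0 hbad.finite.eventually_cofinite_notMem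

theorem convex_range_pt_left (c : ℝ) : Convex ℝ (range fun x => pt x c) := by
  rintro _ ⟨x, rfl⟩ _ ⟨y, rfl⟩ a b - - hab
  refine ⟨a * x + b * y, ?_⟩
  simp only [pt, Prod.smul_mk, Prod.mk_add_mk, smul_eq_mul, Prod.mk.injEq]
  exact ⟨trivial, by linear_combination -c * hab, by ring⟩

theorem eventually_dist_pt_le (X : Finset ℝ) (c : ℝ) {δ : ℝ} (hδ : 0 < δ) :
    ∀ᶠ ε in 𝓝 (0 : ℝ), ∀ x ∈ X, dist (pt x (c + ε * x)) (pt x c) ≤ δ := by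
  refine (eventually_all_finset X).2 fun x _ => ?_
  have : Continuous fun ε : ℝ => pt x (c + ε * x) := by unfold pt; fun_prop
  exact this.tendsto' 0 _ (by simp) |>.eventually (closedBall_mem_nhds _ hδ)

theorem exists_forall_disjoint_convexHull {X : Finset ℝ} (hX : (0 : ℝ) ∉ X)
    {R : Finset (Set ℝ³)} (hR : ∀ r ∈ R, IsLine r) (hXR : ∀ x ∈ X, ruling x ∉ R) :
    ∃ c ε : ℝ, ∀ r ∈ R, Disjoint (convexHull ℝ ((fun x => pt x (c + ε * x)) '' X)) r := by
  obtain ⟨c, hc⟩ := exists_forall_pt_notMem hR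
  set S := convexHull ℝ ((fun x => pt x c) '' X)
  set F := ⋃ r ∈ {r ∈ (R : Set (Set ℝ³)) | ¬ r ⊆ surface}, r
  have hSF : Disjoint S F := by
    have hS : S ⊆ range fun x => pt x c :=
      convexHull_min (image_subset_range _ _) (convex_range_pt_left c)
    refine Set.disjoint_left.2 fun p hpS hpF => ?_
    obtain ⟨x, rfl⟩ := hS hpS
    obtain ⟨r, ⟨hr, hrS⟩, hxr⟩ := mem_iUnion₂.1 hpF
    exact hc r hr hrS x hxr
  have hF : IsClosed F := (R.finite_toSet.sep _).isClosed_biUnion fun r hr => (hR r hr.1).isClosed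
  obtain ⟨δ, hδ, hδSF⟩ :=
    hSF.exists_cthickenings ((X.finite_toSet.image _).isCompact_convexHull (𝕜 := ℝ)) hF
  obtain ⟨ε, ⟨hεδ, hεR⟩, hε0⟩ :=
    (((eventually_dist_pt_le X c hδ).filter_mono nhdsWithin_le_nhds).and
    (eventually_pt_notMem hR hX hXR c)).and self_mem_nhdsWithin |>.exists
  refine ⟨c, ε, fun r hr => ?_⟩
  by_cases hrS : r ⊆ surface
  · refine Set.disjoint_right.2 fun p hpr hpK => ?_
    rw [← Finset.coe_image] at hpK
    obtain ⟨x, hx, rfl⟩ := Finset.mem_image.1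
      (convexHull_inter_surface_subset (c := c) hε0 (by simp [pt]) ⟨hpK, hrS hpr⟩)
    exact hεR r hr x hx hpr
  · have hK : convexHull ℝ ((fun x => pt x (c + ε * x)) '' X) ⊆ cthickening δ S := by
      refine convexHull_min ?_ ((convex_convexHull ℝ _).cthickening δ)
      rintro _ ⟨x, hx, rfl⟩
      exact mem_cthickening_of_dist_le _ _ _ _ (subset_convexHull ℝ _ ⟨x, hx, rfl⟩) (hεδ x hx)
    have hrF : r ⊆ F := subset_biUnion_of_mem (u := id)
      (show r ∈ {r ∈ (R : Set (Set ℝ³)) | ¬ r ⊆ surface} from ⟨hr, hrS⟩)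
    exact hδSF.mono hK (hrF.trans (self_subset_cthickening _))

theorem exists_convex_forall_inter_ruling_nonempty {X : Finset ℝ} (hX : (0 : ℝ) ∉ X)
    {R : Finset (Set ℝ³)} (hR : ∀ r ∈ R, IsLine r) (hXR : ∀ x ∈ X, ruling x ∉ R) :
    ∃ K : Set ℝ³, K.Nonempty ∧ IsCompact K ∧ Convex ℝ K ∧
      (∀ x ∈ X, (K ∩ ruling x).Nonempty) ∧ ∀ r ∈ R, Disjoint K r := by
  classical
  -- An extra vertex `x₀` keeps the hull nonempty when `X` is empty.
  obtain ⟨x₀, hx₀⟩ :=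
    Infinite.exists_notMem_finset (insert 0 (R.preimage ruling ruling_injective.injOn))
  rw [Finset.mem_insert, Finset.mem_preimage, not_or] at hx₀
  set X' := insert x₀ X
  obtain ⟨c, ε, hK⟩ := exists_forall_disjoint_convexHull (X := X')
    (by simpa [X', hX] using Ne.symm hx₀.1) hR (by simpa [X', hx₀.2] using hXR)
  set f := fun x => pt x (c + ε * x)
  have hf : f '' X' ⊆ convexHull ℝ (f '' X') := subset_convexHull ℝ _
  refine ⟨convexHull ℝ (f '' X'), ⟨f x₀, hf ⟨x₀, X.mem_insert_self x₀, rfl⟩⟩,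
    (X'.finite_toSet.image f).isCompact_convexHull (𝕜 := ℝ), convex_convexHull ℝ _,
    fun x hx => ⟨f x, hf ⟨x, X.mem_insert_of_mem hx, rfl⟩, pt_mem_ruling _ _⟩, hK⟩

end Saddle

open Saddle in
theorem stmt_9 (n : ℕ) :
    ∃ L : Finset (Set (ℝ × ℝ × ℝ)),
      L.card = n ∧ (∀ ℓ ∈ L, IsLine ℓ) ∧
      (∀ ℓ₁ ∈ L, ∀ ℓ₂ ∈ L, ℓ₁ ≠ ℓ₂ → Disjoint ℓ₁ ℓ₂) ∧
      ∀ B ⊆ L, ∀ R : Finset (Set (ℝ × ℝ × ℝ)), (∀ r ∈ R, IsLine r) →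
        (∀ ℓ ∈ B, ℓ ∉ R) →
        ∃ K : Set (ℝ × ℝ × ℝ), K.Nonempty ∧ IsCompact K ∧ Convex ℝ K ∧
          (∀ ℓ ∈ B, (K ∩ ℓ).Nonempty) ∧ ∀ r ∈ R, Disjoint K r := by
  classical
  set A : Finset ℝ := (Finset.range n).image fun k : ℕ => (k : ℝ) + 1
  have hA : (0 : ℝ) ∉ A := by
    simp only [A, Finset.mem_image, not_exists, not_and]
    intro k _ hk
    linarith [k.cast_nonneg (α := ℝ)]
  refine ⟨A.image ruling, ?_, ?_, ?_, ?_⟩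
  · rw [Finset.card_image_of_injective _ ruling_injective,
      Finset.card_image_of_injective _ fun a b h => by simpa using h, Finset.card_range]
  · simp only [Finset.mem_image]
    rintro _ ⟨α, -, rfl⟩
    exact isLine_ruling α
  · simp only [Finset.mem_image]
    rintro _ ⟨α, -, rfl⟩ _ ⟨β, -, rfl⟩ h
    exact disjoint_ruling (ne_of_apply_ne _ h)
  · intro B hB R hR hBR
    obtain ⟨K, hK, hKc, hKconv, hKB, hKR⟩ := exists_convex_forall_inter_ruling_nonempty
      (X := A.filter (ruling · ∈ B)) (fun h => hA (Finset.mem_filter.1 h).1) hR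
      fun α hα => hBR _ (Finset.mem_filter.1 hα).2
    refine ⟨K, hK, hKc, hKconv, fun ℓ hℓ => ?_, hKR⟩
    obtain ⟨α, hα, rfl⟩ := Finset.mem_image.1 (hB hℓ)
    exact hKB α (Finset.mem_filter.2 ⟨hα, hℓ⟩)
end

section
/- Let H = (V, E) be a hypergraph in which every edge e ∈ E is a finite subset of V. If for every finite W ⊆ V the induced hypergraph H[W] admits a proper k-coloring (a partition of W into k parts none of which contains an edge of H lying inside W), then H admits a proper k-coloring. -/
/-!
Give the finite colour set the discrete topology, so that `V → α` is compact by Tychonoff.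
For a finite edge `e`, the colourings under which `e` is not monochromatic form a closed set,
as they are cut out by the finitely many coordinates in `e`. A finite family of edges lies inside
the finite set `W` of its vertices, so a proper colouring of `H[W]` lies in all of the corresponding
closed sets; by compactness the whole family of closed sets has a common point.
-/

open Set

section

variable {V α : Type*}

def Monochromatic (c : V → α) (e : Set V) : Prop :=
  ∃ i, ∀ v ∈ e, c v = i

lemma isClosed_setOf_not_monochromatic [TopologicalSpace α] [DiscreteTopology α] {e : Set V}
    (he : e.Finite) : IsClosed {c : V → α | ¬ Monochromatic c e} := by
  have h : {c : V → α | Monochromatic c e} = ⋃ i, ⋂ v ∈ e, (fun c => c v) ⁻¹' {i} := by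
    ext c; simp [Monochromatic]
  change IsClosed {c : V → α | Monochromatic c e}ᶜ
  rw [isClosed_compl_iff, h]
  exact isOpen_iUnion fun i => he.isOpen_biInter fun v _ =>
    (continuous_apply v).isOpen_preimage _ (isOpen_discrete _)

theorem exists_forall_not_monochromatic_of_forall_finset [Finite α] (E : Set (Set V))
    (hfin : ∀ e ∈ E, e.Finite)
    (hW : ∀ W : Finset V, ∃ c : V → α, ∀ e ∈ E, e ⊆ ↑W → ¬ Monochromatic c e) :
    ∃ c : V → α, ∀ e ∈ E, ¬ Monochromatic c e := by
  let : TopologicalSpace α := ⊥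
  have : DiscreteTopology α := ⟨rfl⟩
  have hfinite_subfamily (u : Finset E) :
      (univ ∩ ⋂ e ∈ u, {c : V → α | ¬ Monochromatic c e}).Nonempty := by
    have hW_fin : (⋃ e ∈ u, (e : Set V)).Finite := u.finite_toSet.biUnion fun e _ => hfin e e.2
    obtain ⟨c, hc⟩ := hW hW_fin.toFinset
    refine ⟨c, mem_univ c, mem_iInter₂.2 fun e he => hc e e.2 ?_⟩
    rw [hW_fin.coe_toFinset]
    exact subset_biUnion_of_mem (u := fun e : E => (e : Set V)) he
  obtain ⟨c, -, hc⟩ := isCompact_univ.inter_iInter_nonempty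
    (fun e : E => {c : V → α | ¬ Monochromatic c e})
    (fun e => isClosed_setOf_not_monochromatic (hfin e e.2)) hfinite_subfamily
  exact ⟨c, fun e he => mem_iInter.1 hc ⟨e, he⟩⟩

end

theorem stmt_12 {V : Type*} (E : Set (Set V)) (k : ℕ)
    (hfin : ∀ e ∈ E, e.Finite)
    (hW : ∀ W : Finset V, ∃ c : V → Fin k,
      ∀ e ∈ E, e ⊆ ↑W → ¬ ∃ i : Fin k, ∀ v ∈ e, c v = i) :
    ∃ c : V → Fin k, ∀ e ∈ E, ¬ ∃ i : Fin k, ∀ v ∈ e, c v = i :=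
  exists_forall_not_monochromatic_of_forall_finset E hfin hW
end

section
/- Let F̂ be a family of compact convex sets in ℝ³, all contained in a common ball, such that for every set of k lines in ℝ³ at least one member of F̂ is missed by all k lines. Then there is a finite subfamily F ⊆ F̂ with the same property: every set of k lines misses at least one member of F. -/
open Metric Set

section

variable {E : Type*} [NormedAddCommGroup E] [NormedSpace ℝ E]

theorem isClosed_setOf_exists_mem_Icc_add_smul_mem {K : Set E} (hK : IsClosed K) (r : ℝ) :
    IsClosed {q : E × E | ∃ t ∈ Icc (-r) r, q.1 + t • q.2 ∈ K} := by
  have hclosed : IsClosed {z : (E × E) × Icc (-r) r | z.1.1 + (z.2 : ℝ) • z.1.2 ∈ K} :=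
    hK.preimage (by fun_prop)
  convert isClosedMap_fst_of_compactSpace _ hclosed using 1
  ext q
  simp

theorem exists_eq_add_smul_of_mem_line {p v x y : E} (hv : v ≠ 0)
    (hx : ∃ t : ℝ, x = p + t • v) (hy : ∃ t : ℝ, y = p + t • v) :
    ∃ t : ℝ, |t| = dist y x ∧ y = x + t • (‖v‖⁻¹ • v) := by
  obtain ⟨a, rfl⟩ := hx
  obtain ⟨b, rfl⟩ := hy
  have hv' : ‖v‖ ≠ 0 := norm_ne_zero_iff.mpr hv
  refine ⟨(b - a) * ‖v‖, ?_, ?_⟩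
  · rw [dist_eq_norm, add_sub_add_left_eq_sub, ← sub_smul, norm_smul, Real.norm_eq_abs,
      abs_mul, abs_norm]
  · rw [smul_smul, mul_assoc, mul_inv_cancel₀ hv', mul_one, add_assoc, ← add_smul]
    ring_nf

theorem IsLine.exists_param {ℓ : Set E} (hℓ : IsLine ℓ) (c : E) {ρ : ℝ} (hρ : 0 ≤ ρ) :
    ∃ q ∈ closedBall c ρ ×ˢ sphere (0 : E) 1,
      ∀ x ∈ ℓ ∩ closedBall c ρ, ∃ t ∈ Icc (-(2 * ρ)) (2 * ρ), x = q.1 + t • q.2 := by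
  obtain ⟨p, v, hv, rfl⟩ := hℓ
  have hu : ‖v‖⁻¹ • v ∈ sphere (0 : E) 1 := by
    rw [mem_sphere_zero_iff_norm, norm_smul, norm_inv, norm_norm,
      inv_mul_cancel₀ (norm_ne_zero_iff.mpr hv)]
  by_cases hmeet : ({x | ∃ t : ℝ, x = p + t • v} ∩ closedBall c ρ).Nonempty
  · obtain ⟨y, hyℓ, hyB⟩ := hmeet
    refine ⟨(y, ‖v‖⁻¹ • v), ⟨hyB, hu⟩, fun x ⟨hxℓ, hxB⟩ => ?_⟩
    obtain ⟨t, ht, rfl⟩ := exists_eq_add_smul_of_mem_line hv hyℓ hxℓ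
    refine ⟨t, abs_le.mp ?_, rfl⟩
    rw [ht]
    linarith [dist_triangle_right (y + t • (‖v‖⁻¹ • v)) y c, mem_closedBall.mp hxB,
      mem_closedBall.mp hyB]
  · exact ⟨(c, ‖v‖⁻¹ • v), ⟨mem_closedBall_self hρ, hu⟩,
      fun x hx => absurd ⟨x, hx⟩ hmeet⟩

theorem exists_finite_subfamily_forall_lines_disjoint [ProperSpace E] (k : ℕ)
    {F' : Set (Set E)} (hclosed : ∀ K ∈ F', IsClosed K) (c : E) {ρ : ℝ} (hρ : 0 ≤ ρ)
    (hball : ∀ K ∈ F', K ⊆ closedBall c ρ)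
    (hmiss : ∀ ℓ : Fin k → Set E, (∀ i, IsLine (ℓ i)) → ∃ K ∈ F', ∀ i, Disjoint (ℓ i) K) :
    ∃ F ⊆ F', F.Finite ∧
      ∀ ℓ : Fin k → Set E, (∀ i, IsLine (ℓ i)) → ∃ K ∈ F, ∀ i, Disjoint (ℓ i) K := by
  set P : Set (Fin k → E × E) := univ.pi fun _ => closedBall c ρ ×ˢ sphere (0 : E) 1
  have hP : IsCompact P :=
    isCompact_univ_pi fun _ => (isCompact_closedBall c ρ).prod (isCompact_sphere 0 1)
  set segmentMeets : F' → Set (Fin k → E × E) := fun K =>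
    ⋃ i, (fun f => f i) ⁻¹' {q | ∃ t ∈ Icc (-(2 * ρ)) (2 * ρ), q.1 + t • q.2 ∈ (K : Set E)}
  have hsegmentMeets : ∀ K, IsClosed (segmentMeets K) := fun K =>
    isClosed_iUnion_of_finite fun i =>
      (isClosed_setOf_exists_mem_Icc_add_smul_mem (hclosed K K.2) _).preimage
        (continuous_apply i)
  have hempty : P ∩ ⋂ K, segmentMeets K = ∅ := by
    refine eq_empty_of_forall_notMem fun f ⟨hfP, hfK⟩ => ?_
    have hv : ∀ i, (f i).2 ≠ 0 := fun i =>
      ne_zero_of_mem_sphere one_ne_zero ⟨_, (hfP i (mem_univ i)).2⟩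
    obtain ⟨K, hKF, hdisj⟩ :=
      hmiss (fun i => {x | ∃ t : ℝ, x = (f i).1 + t • (f i).2}) fun i => ⟨_, _, hv i, rfl⟩
    obtain ⟨i, t, -, ht⟩ := mem_iUnion.mp (mem_iInter.mp hfK ⟨K, hKF⟩)
    exact disjoint_left.mp (hdisj i) ⟨t, rfl⟩ ht
  obtain ⟨u, hu⟩ := hP.elim_finite_subfamily_closed segmentMeets hsegmentMeets hempty
  refine ⟨Subtype.val '' (u : Set F'), by simp, u.finite_toSet.image _, fun ℓ hℓ => ?_⟩
  choose q hqP hq using fun i => (hℓ i).exists_param c hρ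
  have hqu := eq_empty_iff_forall_notMem.mp hu q
  simp only [mem_inter_iff, mem_iInter, not_and, not_forall] at hqu
  obtain ⟨K, hKu, hqK⟩ := hqu fun i _ => hqP i
  refine ⟨K, ⟨K, hKu, rfl⟩, fun i => disjoint_left.mpr fun x hxℓ hxK => hqK ?_⟩
  obtain ⟨t, ht, rfl⟩ := hq i x ⟨hxℓ, hball K K.2 hxK⟩
  exact mem_iUnion.mpr ⟨i, t, ht, hxK⟩

end

theorem stmt_13_general (k : ℕ) (F' : Set (Set (EuclideanSpace ℝ (Fin 3))))
    (hcpt : ∀ K ∈ F', IsCompact K)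
    (c : EuclideanSpace ℝ (Fin 3)) (ρ : ℝ)
    (hball : ∀ K ∈ F', K ⊆ Metric.closedBall c ρ)
    (hmiss : ∀ ℓ : Fin k → Set (EuclideanSpace ℝ (Fin 3)), (∀ i, IsLine (ℓ i)) →
      ∃ K ∈ F', ∀ i, Disjoint (ℓ i) K) :
    ∃ F ⊆ F', F.Finite ∧
      ∀ ℓ : Fin k → Set (EuclideanSpace ℝ (Fin 3)), (∀ i, IsLine (ℓ i)) →
        ∃ K ∈ F, ∀ i, Disjoint (ℓ i) K :=
  exists_finite_subfamily_forall_lines_disjoint k (fun K hK => (hcpt K hK).isClosed) c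
    (le_max_right ρ 0)
    (fun K hK => (hball K hK).trans (closedBall_subset_closedBall (le_max_left ρ 0))) hmiss

theorem stmt_13 (k : ℕ) (F' : Set (Set (EuclideanSpace ℝ (Fin 3))))
    (hcpt : ∀ K ∈ F', IsCompact K) (hconv : ∀ K ∈ F', Convex ℝ K)
    (c : EuclideanSpace ℝ (Fin 3)) (ρ : ℝ)
    (hball : ∀ K ∈ F', K ⊆ Metric.closedBall c ρ)
    (hmiss : ∀ ℓ : Fin k → Set (EuclideanSpace ℝ (Fin 3)), (∀ i, IsLine (ℓ i)) →
      ∃ K ∈ F', ∀ i, Disjoint (ℓ i) K) :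
    ∃ F ⊆ F', F.Finite ∧
      ∀ ℓ : Fin k → Set (EuclideanSpace ℝ (Fin 3)), (∀ i, IsLine (ℓ i)) →
        ∃ K ∈ F, ∀ i, Disjoint (ℓ i) K :=
  stmt_13_general k F' hcpt c ρ hball hmiss
end

section
/- Let r₁, r₂, r₃ be a separated triple of rays in ℝ². If a point x lies in the joint region of r₁, r₂, r₃, then x is contained in every triangle spanned by r₁, r₂, r₃ (i.e., in the convex hull of any three points, one from each ray). -/
/-- The ray with initial point `p` and direction `v`. -/
def raySet (p v : ℝ × ℝ) : Set (ℝ × ℝ) := {x | ∃ t : ℝ, 0 ≤ t ∧ x = p + t • v}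

/-- A triple of rays (given by initial points `p i` and directions `v i`) is *separated*
if the directions are pairwise linearly independent and no line meets all three rays. -/
def SeparatedTriple (p v : Fin 3 → ℝ × ℝ) : Prop :=
  (∀ i, v i ≠ 0) ∧ (∀ i j, i ≠ j → LinearIndependent ℝ ![v i, v j]) ∧
  ¬ ∃ L : Set (ℝ × ℝ), IsLine L ∧ ∀ i, (L ∩ raySet (p i) (v i)).Nonempty

/-- The half-strip `X_i`: points on translates of ray `i` with initial point on the side
`s_i` of the triangle of initial points opposite to `p i`. -/
def halfStrip (p v : Fin 3 → ℝ × ℝ) (i : Fin 3) : Set (ℝ × ℝ) :=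
  {x | ∃ q ∈ segment ℝ (p (i + 1)) (p (i + 2)), ∃ t : ℝ, 0 ≤ t ∧ x = q + t • v i}

/-- The joint region `X₁ ∩ X₂ ∩ X₃`. -/
def jointRegion (p v : Fin 3 → ℝ × ℝ) : Set (ℝ × ℝ) := ⋂ i, halfStrip p v i

/-!
Use barycentric coordinates for the triangle `a`, which is nondegenerate because a line through
its vertices would meet all three rays. Let `f` be the coordinate vanishing on the side
`a (i+1) a (i+2)`. The line `f = 0` misses ray `i`, so `f > 0` on it; and if `f (p j) < 0` for
`j ≠ i`, then `f` increases along ray `j`, since `f (a j) = 0`. Hence either some half-strip has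
`f ≥ 0` at both ends of its base and a direction along which `f` does not decrease, which gives
`f x ≥ 0`, or `f (p (i+1)), f (p (i+2)) < 0`, and then the level line `f = f (p i)` meets all
three rays.
-/

theorem collinear_of_forall_apply_eq {k V P : Type*} [DivisionRing k] [AddCommGroup V] [Module k V]
    [AddTorsor V P] [FiniteDimensional k V] (hV : Module.finrank k V = 2) (f : P →ᵃ[k] k)
    (hf : f.linear ≠ 0) {s : Set P} {c : k} (hs : ∀ y ∈ s, f y = c) : Collinear k s := by
  have hspan : vectorSpan k s ≤ LinearMap.ker f.linear := by
    rw [vectorSpan_def, Submodule.span_le]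
    rintro _ ⟨y, hy, z, hz, rfl⟩
    simp [AffineMap.linearMap_vsub, hs y hy, hs z hz]
  have hker : Module.finrank k (LinearMap.ker f.linear) = 1 := by
    have := Module.Dual.finrank_ker_add_one_of_ne_zero hf
    omega
  rw [collinear_iff_finrank_le_one]
  exact hker ▸ Submodule.finrank_mono hspan

theorem exists_isLine_superset_of_collinear {E : Type*} [AddCommGroup E] [Module ℝ E]
    [Nontrivial E] {s : Set E} (hs : Collinear ℝ s) : ∃ L, IsLine L ∧ s ⊆ L := by
  obtain ⟨p, w, hw⟩ := (collinear_iff_exists_forall_eq_smul_vadd s).mp hs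
  by_cases hw0 : w = 0
  · obtain ⟨u, hu⟩ := exists_ne (0 : E)
    refine ⟨_, ⟨p, u, hu, rfl⟩, fun y hy => ⟨0, ?_⟩⟩
    obtain ⟨r, rfl⟩ := hw y hy
    simp [hw0]
  · refine ⟨_, ⟨p, w, hw0, rfl⟩, fun y hy => ?_⟩
    obtain ⟨r, rfl⟩ := hw y hy
    exact ⟨r, by rw [vadd_eq_add, add_comm]⟩

theorem SeparatedTriple.not_collinear {p v : Fin 3 → ℝ × ℝ} (hsep : SeparatedTriple p v)
    {y : Fin 3 → ℝ × ℝ} (hy : ∀ i, y i ∈ raySet (p i) (v i)) : ¬ Collinear ℝ (Set.range y) := by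
  intro hcol
  obtain ⟨L, hL, hyL⟩ := exists_isLine_superset_of_collinear hcol
  exact hsep.2.2 ⟨L, hL, fun i => ⟨y i, hyL ⟨i, rfl⟩, hy i⟩⟩

theorem SeparatedTriple.not_forall_exists_apply_eq {p v : Fin 3 → ℝ × ℝ}
    (hsep : SeparatedTriple p v) (f : ℝ × ℝ →ᵃ[ℝ] ℝ) (hf : f.linear ≠ 0) (c : ℝ) :
    ¬ ∀ i, ∃ y ∈ raySet (p i) (v i), f y = c := by
  intro h
  choose y hy hfy using h
  refine hsep.not_collinear hy (collinear_of_forall_apply_eq (c := c) ?_ f hf ?_)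
  · simp
  · rintro _ ⟨i, rfl⟩
    exact hfy i

theorem AffineMap.apply_add_smul {k E : Type*} [Ring k] [AddCommGroup E] [Module k E]
    (f : E →ᵃ[k] k) (p v : E) (t : k) : f (p + t • v) = f p + t * f.linear v := by
  rw [add_comm p, ← vadd_eq_add, f.map_vadd, map_smul, smul_eq_mul, vadd_eq_add, add_comm]

section Ray

variable (f : ℝ × ℝ →ᵃ[ℝ] ℝ) {p v : ℝ × ℝ}

theorem linear_pos_of_apply_lt {y : ℝ × ℝ} (hy : y ∈ raySet p v) (h : f p < f y) :
    0 < f.linear v := by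
  obtain ⟨s, hs, rfl⟩ := hy
  rw [f.apply_add_smul] at h
  exact pos_of_mul_pos_right (by linarith) hs

theorem exists_mem_raySet_apply_eq (hv : 0 < f.linear v) {c : ℝ} (hc : f p ≤ c) :
    ∃ z ∈ raySet p v, f z = c := by
  refine ⟨_, ⟨(c - f p) / f.linear v, div_nonneg (by linarith) hv.le, rfl⟩, ?_⟩
  rw [f.apply_add_smul, div_mul_cancel₀ _ hv.ne']
  ring

theorem pos_and_linear_nonneg_of_ne_zero_on_raySet (h0 : ∀ y ∈ raySet p v, f y ≠ 0)
    {y : ℝ × ℝ} (hy : y ∈ raySet p v) (hpos : 0 < f y) : 0 < f p ∧ 0 ≤ f.linear v := by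
  have hp : 0 < f p := by
    by_contra! hp
    obtain ⟨z, hz, hfz⟩ :=
      exists_mem_raySet_apply_eq f (linear_pos_of_apply_lt f hy (by linarith)) hp
    exact h0 z hz hfz
  refine ⟨hp, ?_⟩
  by_contra! hv
  obtain ⟨z, hz, hfz⟩ :=
    exists_mem_raySet_apply_eq (-f) (by simpa using hv) (c := 0) (by simpa using hp.le)
  exact h0 z hz (by simpa using hfz)

end Ray

theorem apply_nonneg_of_mem_halfStrip (f : ℝ × ℝ →ᵃ[ℝ] ℝ) {p v : Fin 3 → ℝ × ℝ} {i : Fin 3}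
    {x : ℝ × ℝ} (hx : x ∈ halfStrip p v i) (h₁ : 0 ≤ f (p (i + 1))) (h₂ : 0 ≤ f (p (i + 2)))
    (hv : 0 ≤ f.linear (v i)) : 0 ≤ f x := by
  obtain ⟨q, hq, t, ht, rfl⟩ := hx
  have hfq : f q ∈ segment ℝ (f (p (i + 1))) (f (p (i + 2))) := by
    rw [← image_segment]
    exact ⟨q, hq, rfl⟩
  have : 0 ≤ f q := (convex_Ici 0).segment_subset h₁ h₂ hfq
  rw [f.apply_add_smul]
  positivity

theorem SeparatedTriple.apply_nonneg_of_mem_jointRegion {p v : Fin 3 → ℝ × ℝ}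
    (hsep : SeparatedTriple p v) {x : ℝ × ℝ} (hx : x ∈ jointRegion p v)
    {a : Fin 3 → ℝ × ℝ} (ha : ∀ i, a i ∈ raySet (p i) (v i)) (f : ℝ × ℝ →ᵃ[ℝ] ℝ) (i : Fin 3)
    (h₀ : 0 < f (a i)) (h₁ : f (a (i + 1)) = 0) (h₂ : f (a (i + 2)) = 0) : 0 ≤ f x := by
  have hcover : ∀ j, j = i ∨ j = i + 1 ∨ j = i + 2 := by fin_cases i <;> decide
  have hlevel : ∀ c, ¬ ∀ j, ∃ y ∈ raySet (p j) (v j), f y = c := by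
    refine hsep.not_forall_exists_apply_eq f fun hf => h₀.ne ?_
    have h := f.linearMap_vsub (a i) (a (i + 1))
    rw [hf, LinearMap.zero_apply, vsub_eq_sub, h₁, sub_zero] at h
    exact h
  have hray : ∀ y ∈ raySet (p i) (v i), f y ≠ 0 := by
    refine fun y hy hfy => hlevel 0 fun j => ?_
    rcases hcover j with rfl | rfl | rfl
    exacts [⟨y, hy, hfy⟩, ⟨_, ha _, h₁⟩, ⟨_, ha _, h₂⟩]
  obtain ⟨hp, hv⟩ := pos_and_linear_nonneg_of_ne_zero_on_raySet f hray (ha i) h₀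
  have strip : ∀ j, x ∈ halfStrip p v j := Set.mem_iInter.mp hx
  have hi₁ : i + 1 + 1 = i + 2 ∧ i + 1 + 2 = i := by fin_cases i <;> decide
  have hi₂ : i + 2 + 1 = i ∧ i + 2 + 2 = i + 1 := by fin_cases i <;> decide
  rcases le_or_gt 0 (f (p (i + 1))) with hp₁ | hp₁ <;>
    rcases le_or_gt 0 (f (p (i + 2))) with hp₂ | hp₂
  · exact apply_nonneg_of_mem_halfStrip f (strip i) hp₁ hp₂ hv
  · exact apply_nonneg_of_mem_halfStrip f (strip (i + 2)) (by rw [hi₂.1]; exact hp.le)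
      (by rwa [hi₂.2])
      (linear_pos_of_apply_lt f (ha _) (by linarith)).le
  · exact apply_nonneg_of_mem_halfStrip f (strip (i + 1)) (by rwa [hi₁.1])
      (by rw [hi₁.2]; exact hp.le)
      (linear_pos_of_apply_lt f (ha _) (by linarith)).le
  · -- the parallel to `a (i+1) a (i+2)` through `p i` would meet all three rays
    refine (hlevel (f (p i)) fun j => ?_).elim
    rcases hcover j with rfl | rfl | rfl
    · exact ⟨p j, ⟨0, le_rfl, by simp⟩, rfl⟩
    · exact exists_mem_raySet_apply_eq f (linear_pos_of_apply_lt f (ha _) (by linarith))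
        (by linarith)
    · exact exists_mem_raySet_apply_eq f (linear_pos_of_apply_lt f (ha _) (by linarith))
        (by linarith)

theorem stmt_16 (p v : Fin 3 → ℝ × ℝ) (hsep : SeparatedTriple p v)
    (x : ℝ × ℝ) (hx : x ∈ jointRegion p v)
    (a : Fin 3 → ℝ × ℝ) (ha : ∀ i, a i ∈ raySet (p i) (v i)) :
    x ∈ convexHull ℝ (Set.range a) := by
  have hind : AffineIndependent ℝ a :=
    affineIndependent_iff_not_collinear.mpr (hsep.not_collinear ha)
  have hspan : affineSpan ℝ (Set.range a) = ⊤ := by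
    rw [hind.affineSpan_eq_top_iff_card_eq_finrank_add_one]
    simp
  let b : AffineBasis (Fin 3) ℝ (ℝ × ℝ) := ⟨a, hind, hspan⟩
  change x ∈ convexHull ℝ (Set.range b)
  rw [b.convexHull_eq_nonneg_coord]
  intro i
  have h₀ : 0 < b.coord i (b i) := by rw [b.coord_apply_eq]; exact one_pos
  have hne : i ≠ i + 1 ∧ i ≠ i + 2 := by fin_cases i <;> decide
  exact hsep.apply_nonneg_of_mem_jointRegion hx ha (b.coord i) i h₀
    (b.coord_apply_ne hne.1) (b.coord_apply_ne hne.2)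
end

section
/- Let b ∈ ℕ, let 0 < α₁ < ... < α_b, β* ∈ ℝ, s > 0, and let C(s) be the convex hull of the points p_{α_i}(s) = (α_i, β* + s/α_i, β*α_i + s). If α ∉ {α₁, ..., α_b}, then the ruling line λ_α = {(α, t, αt) : t ∈ ℝ} is disjoint from C(s). -/
/-!
The vertices `p_α(s)` lie in the plane `z = β* x + s`, on the curve `y = β* + s / x`, `x > 0`.
This branch of a hyperbola is strictly convex, so every vertex with `α ≠ a` lies strictly on one
side of its tangent line at `x = a`, namely `s x + a² y = 2 a s + a² β*`; hence so does the whole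
hull. A point of `λ_a` in the plane, on the other hand, lies on that line.
-/

/-- The ruling line `λ_α = {(α, t, α t) : t ∈ ℝ}`. -/
def lambdaLine (α : ℝ) : Set (ℝ × ℝ × ℝ) := {q | ∃ t : ℝ, q = (α, t, α * t)}

def plane (β' s : ℝ) : Set (ℝ × ℝ × ℝ) := {q | q.2.2 - β' * q.1 = s}

/-- Points whose `(x, y)` lies strictly above the tangent at `x = a` to the curve `y = β* + s / x`. -/
def aboveTangent (β' s a : ℝ) : Set (ℝ × ℝ × ℝ) :=
  {q | 2 * a * s + a ^ 2 * β' < s * q.1 + a ^ 2 * q.2.1}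

variable {β' s a : ℝ}

theorem convex_plane : Convex ℝ (plane β' s) :=
  convex_hyperplane
    ⟨fun p q => by simp only [Prod.fst_add, Prod.snd_add]; ring,
     fun c q => by simp only [Prod.smul_fst, Prod.smul_snd, smul_eq_mul]; ring⟩ s

theorem convex_aboveTangent : Convex ℝ (aboveTangent β' s a) :=
  convex_halfSpace_gt
    ⟨fun p q => by simp only [Prod.fst_add, Prod.snd_add]; ring,
     fun c q => by simp only [Prod.smul_fst, Prod.smul_snd, smul_eq_mul]; ring⟩ _

theorem pPt_mem_plane (x : ℝ) : pPt β' x s ∈ plane β' s := by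
  simp only [plane, pPt, Set.mem_ofPred_eq]
  ring

theorem pPt_mem_aboveTangent {x : ℝ} (hx : 0 < x) (hs : 0 < s) (hax : a ≠ x) :
    pPt β' x s ∈ aboveTangent β' s a := by
  have hgap : s * x + a ^ 2 * (β' + s / x) - (2 * a * s + a ^ 2 * β') = s * (x - a) ^ 2 / x := by
    field_simp
    ring
  have : 0 < s * (x - a) ^ 2 / x := by
    have := sub_ne_zero.mpr hax.symm
    positivity
  simp only [aboveTangent, pPt, Set.mem_ofPred_eq]
  linarith

theorem notMem_aboveTangent_of_mem_lambdaLine {q : ℝ × ℝ × ℝ} (hq : q ∈ lambdaLine a)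
    (hplane : q ∈ plane β' s) : q ∉ aboveTangent β' s a := by
  obtain ⟨t, rfl⟩ := hq
  simp only [plane, aboveTangent, Set.mem_ofPred_eq, not_lt] at hplane ⊢
  linear_combination a * hplane

theorem disjoint_lambdaLine_convexHull_image_pPt {A : Set ℝ} (hA : ∀ x ∈ A, 0 < x) (hs : 0 < s)
    (haA : a ∉ A) : Disjoint (lambdaLine a) (convexHull ℝ ((fun x => pPt β' x s) '' A)) := by
  have hsub : convexHull ℝ ((fun x => pPt β' x s) '' A) ⊆ plane β' s ∩ aboveTangent β' s a := by
    refine convexHull_min ?_ (convex_plane.inter convex_aboveTangent)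
    rintro _ ⟨x, hx, rfl⟩
    exact ⟨pPt_mem_plane x, pPt_mem_aboveTangent (hA x hx) hs (ne_of_mem_of_not_mem hx haA).symm⟩
  refine Set.disjoint_left.mpr fun q hq hhull => ?_
  exact notMem_aboveTangent_of_mem_lambdaLine hq (hsub hhull).1 (hsub hhull).2

theorem stmt_19_general (b : ℕ) (α : Fin b → ℝ) (hpos : ∀ i, 0 < α i)
    (β' s : ℝ) (hs : 0 < s) (a : ℝ)
    (ha : ∀ i, a ≠ α i) :
    Disjoint (lambdaLine a)
      (convexHull ℝ (Set.range fun i => pPt β' (α i) s)) := by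
  have := disjoint_lambdaLine_convexHull_image_pPt (β' := β') (Set.forall_mem_range.mpr hpos) hs
    fun ⟨i, hi⟩ => ha i hi.symm
  rwa [← Set.range_comp] at this

theorem stmt_19 (b : ℕ) (α : Fin b → ℝ) (hpos : ∀ i, 0 < α i)
    (hmono : StrictMono α) (β' s : ℝ) (hs : 0 < s) (a : ℝ)
    (ha : ∀ i, a ≠ α i) :
    Disjoint (lambdaLine a)
      (convexHull ℝ (Set.range fun i => pPt β' (α i) s)) :=
  stmt_19_general b α hpos β' s hs a ha
end
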